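/- arXiv:2302.09832 — 3 statements merged into one kernel-verified Lean document; each statement's English description precedes it below -/
import Mathlib

section
/- Let n ≥ 3, 2 ≤ s ≤ n, and i ∈ [n]. If Ω is a uniformly random s-element subset of [n] containing i, then for vectors x_1,…,x_n ∈ ℝ^d, E[‖∑_{j∈Ω\{i}} x_j‖²] = ((s−1)/(n−1))·((n−s)/(n−2))·∑_{j≠i}‖x_j‖² + ((s−1)/(n−1))·((s−2)/(n−2))·‖∑_{j≠i} x_j‖². -/
/-!
Removing `i` identifies the `s`-subsets of `[n]` containing `i` with the `(s-1)`-subsets of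
`[n] \ {i}`, so it suffices to average `‖∑_{j∈A} x_j‖²` over a uniform `t`-subset `A` of an
`m`-set. Expanding the square, each pair `(j, k)` contributes `⟪x_j, x_k⟫` times the probability
that `{j, k} ⊆ A`, which is `t/m` for `j = k` and `t(t-1)/(m(m-1))` for `j ≠ k`.
-/

open Finset

namespace Finset

variable {ι : Type*} [DecidableEq ι]

/-- The falling factorials make this hold also when `s < #T`, where both sides vanish. -/
theorem card_filter_powersetCard_subset_mul_descFactorial {T u : Finset ι} (hT : T ⊆ u)
    (s : ℕ) :
    #{A ∈ u.powersetCard s | T ⊆ A} * (#u).descFactorial #T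
      = (#u).choose s * s.descFactorial #T := by
  rcases lt_or_ge s #T with hs | hs
  · rw [Nat.descFactorial_eq_zero_iff_lt.2 hs, mul_zero, mul_eq_zero, card_eq_zero,
      filter_eq_empty_iff]
    refine Or.inl fun A hA hTA => ?_
    have := card_le_card hTA
    rw [(mem_powersetCard.1 hA).2] at this
    omega
  · rw [card_filter_powersetCard_subset T u s hT hs, Nat.descFactorial_eq_factorial_mul_choose,
      Nat.descFactorial_eq_factorial_mul_choose, mul_left_comm ((#u).choose s),
      Nat.choose_mul hs]
    ring

theorem sum_filter_mem_powersetCard_succ {β : Type*} [AddCommMonoid β] {u : Finset ι} {a : ι}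
    (ha : a ∈ u) (k : ℕ) (f : Finset ι → β) :
    ∑ Ω ∈ u.powersetCard (k + 1) with a ∈ Ω, f (Ω.erase a)
      = ∑ A ∈ (u.erase a).powersetCard k, f A := by
  refine sum_nbij' (·.erase a) (insert a) ?_ ?_ ?_ ?_ fun _ _ => rfl
  · intro Ω hΩ
    simp only [mem_filter, mem_powersetCard] at hΩ ⊢
    exact ⟨erase_subset_erase a hΩ.1.1, by rw [card_erase_of_mem hΩ.2, hΩ.1.2, Nat.add_sub_cancel]⟩
  · intro A hA
    simp only [mem_filter, mem_powersetCard, subset_erase] at hA ⊢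
    exact ⟨⟨insert_subset ha hA.1.1, by rw [card_insert_of_notMem hA.1.2, hA.2]⟩,
      mem_insert_self a A⟩
  · intro Ω hΩ
    simp only [mem_filter] at hΩ
    exact insert_erase hΩ.2
  · intro A hA
    simp only [mem_powersetCard, subset_erase] at hA
    exact erase_insert hA.1.2

variable {E : Type*} [NormedAddCommGroup E] [InnerProductSpace ℝ E]

open RealInnerProductSpace

theorem sum_sq_norm_sum_eq_sum_sum_card_mul_inner {u : Finset ι} {𝒜 : Finset (Finset ι)}
    (h𝒜 : ∀ A ∈ 𝒜, A ⊆ u) (x : ι → E) :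
    ∑ A ∈ 𝒜, ‖∑ j ∈ A, x j‖ ^ 2
      = ∑ j ∈ u, ∑ k ∈ u, (#{A ∈ 𝒜 | j ∈ A ∧ k ∈ A} : ℝ) * ⟪x j, x k⟫ := by
  have hexpand : ∀ A ∈ 𝒜, ‖∑ j ∈ A, x j‖ ^ 2
      = ∑ j ∈ u, ∑ k ∈ u, if j ∈ A ∧ k ∈ A then ⟪x j, x k⟫ else 0 := by
    intro A hA
    have hAu := inter_eq_right.2 (h𝒜 A hA)
    calc ‖∑ j ∈ A, x j‖ ^ 2 = ∑ j ∈ A, ∑ k ∈ A, ⟪x j, x k⟫ := by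
          simp only [← real_inner_self_eq_norm_sq, sum_inner, inner_sum]
          exact sum_comm
      _ = ∑ j ∈ u, if j ∈ A then ∑ k ∈ u, if k ∈ A then ⟪x j, x k⟫ else 0 else 0 := by
          simp only [sum_ite_mem, hAu]
      _ = _ := by
          refine sum_congr rfl fun j _ => ?_
          by_cases hj : j ∈ A <;> simp [hj]
  rw [sum_congr rfl hexpand, sum_comm]
  refine sum_congr rfl fun j _ => ?_
  rw [sum_comm]
  refine sum_congr rfl fun k _ => ?_
  rw [← sum_filter, sum_const, nsmul_eq_mul]

theorem sum_sum_add_ite_mul_inner (u : Finset ι) (x : ι → E) (α β : ℝ) :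
    ∑ j ∈ u, ∑ k ∈ u, (β + if j = k then α else 0) * ⟪x j, x k⟫
      = α * ∑ j ∈ u, ‖x j‖ ^ 2 + β * ‖∑ j ∈ u, x j‖ ^ 2 := by
  simp only [add_mul, sum_add_distrib, ite_mul, zero_mul, sum_ite_eq, ← mul_sum,
    ← real_inner_self_eq_norm_sq, sum_inner, inner_sum]
  rw [sum_ite_of_true fun _ h => h, ← mul_sum, sum_comm (s := u)]
  ring

theorem inv_card_mul_sum_powersetCard_sq_norm_sum {u : Finset ι} (hu : 2 ≤ #u) {t : ℕ}
    (ht : t ≤ #u) (x : ι → E) :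
    (#(u.powersetCard t) : ℝ)⁻¹ * ∑ A ∈ u.powersetCard t, ‖∑ j ∈ A, x j‖ ^ 2
      = ((t : ℝ) / #u) * ((#u - t) / (#u - 1)) * ∑ j ∈ u, ‖x j‖ ^ 2
        + ((t : ℝ) / #u) * ((t - 1) / (#u - 1)) * ‖∑ j ∈ u, x j‖ ^ 2 := by
  have hN : (#(u.powersetCard t) : ℝ) ≠ 0 := by
    rw [card_powersetCard]
    exact_mod_cast (Nat.choose_pos ht).ne'
  have hm : (#u : ℝ) ≠ 0 := by norm_cast; omega
  have hm1 : (#u : ℝ) - 1 ≠ 0 := by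
    rw [sub_ne_zero]; norm_cast; omega
  have hcount : ∀ j ∈ u, ∀ k ∈ u, (#{A ∈ u.powersetCard t | j ∈ A ∧ k ∈ A} : ℝ)
      = #(u.powersetCard t) * (((t : ℝ) / #u) * ((t - 1) / (#u - 1))
        + if j = k then ((t : ℝ) / #u) * ((#u - t) / (#u - 1)) else 0) := by
    intro j hj k hk
    have key := card_filter_powersetCard_subset_mul_descFactorial
      (insert_subset hj (singleton_subset_iff.2 hk)) t
    simp only [insert_subset_iff, singleton_subset_iff, ← card_powersetCard] at key
    rcases eq_or_ne j k with rfl | hjk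
    · simp only [insert_eq_of_mem (mem_singleton_self j), card_singleton,
        Nat.descFactorial_one] at key
      have keyR := congrArg (Nat.cast : ℕ → ℝ) key
      push_cast at keyR
      rw [if_pos rfl]
      field_simp
      linear_combination (#u - 1 : ℝ) * keyR
    · rw [card_pair hjk] at key
      have keyR := congrArg (Nat.cast : ℕ → ℝ) key
      push_cast [Nat.cast_descFactorial_two] at keyR
      rw [if_neg hjk]
      field_simp
      linear_combination keyR
  rw [sum_sq_norm_sum_eq_sum_sum_card_mul_inner (fun A hA => (mem_powersetCard.1 hA).1),
    sum_congr rfl fun j hj => sum_congr rfl fun k hk => by rw [hcount j hj k hk, mul_assoc]]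
  simp only [← mul_sum]
  rw [sum_sum_add_ite_mul_inner]
  field_simp

end Finset

/-- For `Ω` a uniformly random `s`-element subset of `[n]` containing `i`:
`E‖∑_{j∈Ω\{i}} x_j‖² = ((s−1)/(n−1))((n−s)/(n−2)) ∑_{j≠i}‖x_j‖²
  + ((s−1)/(n−1))((s−2)/(n−2)) ‖∑_{j≠i} x_j‖²`. -/
theorem uniform_subset_containing_sq_norm_sum
    {d n : ℕ} (hn : 3 ≤ n) (s : ℕ) (hs : 2 ≤ s) (hsn : s ≤ n) (i : Fin n)
    (x : Fin n → EuclideanSpace ℝ (Fin d)) :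
    ((((Finset.univ : Finset (Fin n)).powersetCard s).filter (fun Ω => i ∈ Ω)).card : ℝ)⁻¹ *
      ∑ Ω ∈ ((Finset.univ : Finset (Fin n)).powersetCard s).filter (fun Ω => i ∈ Ω),
        ‖∑ j ∈ Ω.erase i, x j‖ ^ 2
    = (((s : ℝ) - 1) / ((n : ℝ) - 1)) * (((n : ℝ) - s) / ((n : ℝ) - 2)) *
        (∑ j ∈ Finset.univ.erase i, ‖x j‖ ^ 2)
      + (((s : ℝ) - 1) / ((n : ℝ) - 1)) * (((s : ℝ) - 2) / ((n : ℝ) - 2)) *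
        ‖∑ j ∈ Finset.univ.erase i, x j‖ ^ 2 := by
  obtain ⟨t, rfl⟩ : ∃ t, s = t + 1 := ⟨s - 1, by omega⟩
  have hi := mem_univ i
  have hu : #(univ.erase i) = n - 1 := by rw [card_erase_of_mem hi, card_univ, Fintype.card_fin]
  have hcard : #{Ω ∈ univ.powersetCard (t + 1) | i ∈ Ω} = #((univ.erase i).powersetCard t) := by
    simpa only [card_eq_sum_ones] using sum_filter_mem_powersetCard_succ hi t fun _ => 1
  rw [hcard, sum_filter_mem_powersetCard_succ hi t fun A => ‖∑ j ∈ A, x j‖ ^ 2,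
    inv_card_mul_sum_powersetCard_sq_norm_sum (by omega) (by omega), hu, Nat.cast_sub (by omega)]
  push_cast
  ring
end

section
/- With the same random vector d as above (Bernoulli(p) activation, uniform s-subset Ω, scaling a = (n−1)/(p(s−1))), one has E[∑_{i=1}^n ‖d_i‖²] = ((n−1)/(p(s−1)))·∑_{i=1}^n ‖x̂_i − (1/n)∑_{j=1}^n x̂_j‖². Consequently, writing ω = (n−1)/(p(s−1)) − 1 and (Wx̂)_i = x̂_i − (1/n)∑_j x̂_j, it holds that E[‖d − Wx̂‖²] = ω‖Wx̂‖². -/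
/-!
For a family `x` over a finite set `Ω`, `x i - mean_Ω x = |Ω|⁻¹ ∑_{j ∈ Ω} (x i - x j)` and
`∑_{i ∈ Ω} ‖x i - mean_Ω x‖² = (2|Ω|)⁻¹ ∑_{i,j ∈ Ω} ‖x i - x j‖²`. The diagonal terms vanish, so
averaging over the `s`-subsets `Ω` only involves the number `C(n-2, s-2)` of subsets containing a
fixed pair `i ≠ j`. Hence the sums of `d` and of `∑ ‖d_i‖²` over `Ω` are multiples of `Wx̂` and of
`‖Wx̂‖²`, with the same factor. The scaling `a` is chosen so that `p a C(n-2, s-2) n / s = C(n, s)`,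
i.e. `E d = Wx̂`, and the second identity is the bias–variance decomposition
`E ‖d - Wx̂‖² = E ‖d‖² - ‖Wx̂‖²`.
-/

open Finset

section SubsetCounting

variable {α M : Type*} [DecidableEq α] [AddCommMonoid M]

lemma card_filter_powersetCard_mem_and_mem {U : Finset α} {i j : α} (hi : i ∈ U) (hj : j ∈ U)
    (hij : i ≠ j) {s : ℕ} (hs : 2 ≤ s) :
    #{Ω ∈ U.powersetCard s | i ∈ Ω ∧ j ∈ Ω} = (#U - 2).choose (s - 2) := by
  have h := card_filter_powersetCard_subset {i, j} U s (by simp [insert_subset_iff, hi, hj])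
    (by rw [card_pair hij]; omega)
  rw [card_pair hij] at h
  rw [← h]
  simp only [insert_subset_iff, singleton_subset_iff]

lemma sum_eq_sum_ite_mem {Ω U : Finset α} (h : Ω ⊆ U) (f : α → M) :
    ∑ i ∈ Ω, f i = ∑ i ∈ U, if i ∈ Ω then f i else 0 := by
  rw [sum_ite_mem, inter_eq_right.2 h]

lemma sum_powersetCard_ite_mem_sum {U : Finset α} {i : α} (hi : i ∈ U) {s : ℕ} (hs : 2 ≤ s)
    {g : α → M} (hg : g i = 0) :
    ∑ Ω ∈ U.powersetCard s, (if i ∈ Ω then ∑ j ∈ Ω, g j else 0)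
      = (#U - 2).choose (s - 2) • ∑ j ∈ U, g j := by
  calc ∑ Ω ∈ U.powersetCard s, (if i ∈ Ω then ∑ j ∈ Ω, g j else 0)
      = ∑ Ω ∈ U.powersetCard s, ∑ j ∈ U, if i ∈ Ω ∧ j ∈ Ω then g j else 0 := by
        refine sum_congr rfl fun Ω hΩ => ?_
        by_cases hiΩ : i ∈ Ω
        · simp only [hiΩ, if_true, true_and]
          exact sum_eq_sum_ite_mem (mem_powersetCard.1 hΩ).1 g
        · simp [hiΩ]
    _ = ∑ j ∈ U, #{Ω ∈ U.powersetCard s | i ∈ Ω ∧ j ∈ Ω} • g j := by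
        rw [sum_comm]
        simp only [← sum_filter, sum_const]
    _ = (#U - 2).choose (s - 2) • ∑ j ∈ U, g j := by
        rw [smul_sum]
        refine sum_congr rfl fun j hj => ?_
        rcases eq_or_ne i j with rfl | hij
        · simp [hg]
        · rw [card_filter_powersetCard_mem_and_mem hi hj hij hs]

lemma sum_powersetCard_sum_sum {U : Finset α} {s : ℕ} (hs : 2 ≤ s) {f : α → α → M}
    (hf : ∀ i, f i i = 0) :
    ∑ Ω ∈ U.powersetCard s, ∑ i ∈ Ω, ∑ j ∈ Ω, f i j
      = (#U - 2).choose (s - 2) • ∑ i ∈ U, ∑ j ∈ U, f i j := by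
  calc ∑ Ω ∈ U.powersetCard s, ∑ i ∈ Ω, ∑ j ∈ Ω, f i j
      = ∑ i ∈ U, ∑ Ω ∈ U.powersetCard s, if i ∈ Ω then ∑ j ∈ Ω, f i j else 0 := by
        rw [sum_comm]
        exact sum_congr rfl fun Ω hΩ => sum_eq_sum_ite_mem (mem_powersetCard.1 hΩ).1 _
    _ = (#U - 2).choose (s - 2) • ∑ i ∈ U, ∑ j ∈ U, f i j := by
        rw [smul_sum]
        exact sum_congr rfl fun i hi => sum_powersetCard_ite_mem_sum hi hs (hf i)

end SubsetCounting

section Variance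

variable {ι E : Type*} [NormedAddCommGroup E] [InnerProductSpace ℝ E]

lemma sum_norm_sub_sq (K : Finset ι) (v : ι → E) (w : E) :
    ∑ k ∈ K, ‖v k - w‖ ^ 2
      = ∑ k ∈ K, ‖v k‖ ^ 2 - 2 * inner ℝ (∑ k ∈ K, v k) w + #K * ‖w‖ ^ 2 := by
  simp only [norm_sub_sq_real, sum_add_distrib, sum_sub_distrib, sum_const, nsmul_eq_mul,
    ← mul_sum, sum_inner]

lemma sum_sum_norm_sub_sq (Ω : Finset ι) (x : ι → E) :
    ∑ i ∈ Ω, ∑ j ∈ Ω, ‖x i - x j‖ ^ 2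
      = 2 * (#Ω * ∑ i ∈ Ω, ‖x i‖ ^ 2 - ‖∑ i ∈ Ω, x i‖ ^ 2) := by
  have h : ∀ i ∈ Ω, ∑ j ∈ Ω, ‖x i - x j‖ ^ 2
      = #Ω * ‖x i‖ ^ 2 - 2 * inner ℝ (x i) (∑ j ∈ Ω, x j) + ∑ j ∈ Ω, ‖x j‖ ^ 2 := by
    intro i _
    simp only [norm_sub_sq_real, sum_add_distrib, sum_sub_distrib, sum_const, nsmul_eq_mul,
      ← mul_sum, inner_sum]
  rw [sum_congr rfl h]
  simp only [sum_add_distrib, sum_sub_distrib, sum_const, nsmul_eq_mul, ← mul_sum, ← sum_inner,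
    real_inner_self_eq_norm_sq]
  ring

lemma sum_norm_sub_inv_card_smul_sum_sq (Ω : Finset ι) (x : ι → E) :
    ∑ i ∈ Ω, ‖x i - (#Ω : ℝ)⁻¹ • ∑ j ∈ Ω, x j‖ ^ 2
      = ∑ i ∈ Ω, ‖x i‖ ^ 2 - (#Ω : ℝ)⁻¹ * ‖∑ i ∈ Ω, x i‖ ^ 2 := by
  rcases Ω.eq_empty_or_nonempty with rfl | hΩ
  · simp
  have hcard : (#Ω : ℝ) ≠ 0 := by positivity
  rw [sum_norm_sub_sq, inner_smul_right, real_inner_self_eq_norm_sq, norm_smul, mul_pow,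
    Real.norm_eq_abs, sq_abs]
  field_simp
  ring

lemma two_mul_card_mul_sum_norm_sub_mean_sq (Ω : Finset ι) (x : ι → E) :
    2 * #Ω * ∑ i ∈ Ω, ‖x i - (#Ω : ℝ)⁻¹ • ∑ j ∈ Ω, x j‖ ^ 2
      = ∑ i ∈ Ω, ∑ j ∈ Ω, ‖x i - x j‖ ^ 2 := by
  rcases Ω.eq_empty_or_nonempty with rfl | hΩ
  · simp
  have hcard : (#Ω : ℝ) ≠ 0 := by positivity
  rw [sum_norm_sub_inv_card_smul_sum_sq, sum_sum_norm_sub_sq]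
  field_simp

lemma sub_inv_card_smul_sum {Ω : Finset ι} (hΩ : Ω.Nonempty) (y : E) (x : ι → E) :
    y - (#Ω : ℝ)⁻¹ • ∑ j ∈ Ω, x j = (#Ω : ℝ)⁻¹ • ∑ j ∈ Ω, (y - x j) := by
  have hcard : (#Ω : ℝ) ≠ 0 := by positivity
  rw [sum_sub_distrib, sum_const, smul_sub, ← Nat.cast_smul_eq_nsmul ℝ, smul_smul,
    inv_mul_cancel₀ hcard, one_smul]

lemma sum_sum_norm_sub_sq_of_sum_eq_smul {κ : Type*} [Fintype ι] {K : Finset κ}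
    {D : κ → ι → E} {w : ι → E} {c : ℝ}
    (h : ∀ i, ∑ k ∈ K, D k i = c • w i) :
    ∑ k ∈ K, ∑ i, ‖D k i - w i‖ ^ 2
      = ∑ k ∈ K, ∑ i, ‖D k i‖ ^ 2 - (2 * c - #K) * ∑ i, ‖w i‖ ^ 2 := by
  rw [sum_comm, sum_comm (s := K)]
  simp only [sum_norm_sub_sq, h, real_inner_smul_left, real_inner_self_eq_norm_sq,
    sum_add_distrib, sum_sub_distrib, ← mul_sum]
  ring

end Variance

section SubsetAverages

variable {ι E : Type*} [NormedAddCommGroup E] [InnerProductSpace ℝ E] [Fintype ι] [DecidableEq ι]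

lemma sum_powersetCard_sum_norm_sub_mean_sq (x : ι → E) {s : ℕ} (hs : 2 ≤ s) :
    ∑ Ω ∈ univ.powersetCard s, ∑ i ∈ Ω, ‖x i - (s : ℝ)⁻¹ • ∑ j ∈ Ω, x j‖ ^ 2
      = ((Fintype.card ι - 2).choose (s - 2) * Fintype.card ι / s : ℝ)
        * ∑ i, ‖x i - (Fintype.card ι : ℝ)⁻¹ • ∑ j, x j‖ ^ 2 := by
  have hs0 : (s : ℝ) ≠ 0 := by positivity
  have hΩ : ∀ Ω ∈ univ.powersetCard s, ∑ i ∈ Ω, ‖x i - (s : ℝ)⁻¹ • ∑ j ∈ Ω, x j‖ ^ 2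
      = (2 * s : ℝ)⁻¹ * ∑ i ∈ Ω, ∑ j ∈ Ω, ‖x i - x j‖ ^ 2 := by
    intro Ω hΩ
    rw [← two_mul_card_mul_sum_norm_sub_mean_sq, (mem_powersetCard.1 hΩ).2]
    field_simp
  have huniv := two_mul_card_mul_sum_norm_sub_mean_sq (univ : Finset ι) x
  rw [card_univ] at huniv
  rw [sum_congr rfl hΩ, ← mul_sum, sum_powersetCard_sum_sum hs (by simp), nsmul_eq_mul,
    card_univ, ← huniv]
  field_simp

lemma sum_powersetCard_ite_mem_sub_mean (x : ι → E) {s : ℕ} (hs : 2 ≤ s) (i : ι) :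
    ∑ Ω ∈ univ.powersetCard s, (if i ∈ Ω then x i - (s : ℝ)⁻¹ • ∑ j ∈ Ω, x j else 0)
      = ((Fintype.card ι - 2).choose (s - 2) * Fintype.card ι / s : ℝ)
        • (x i - (Fintype.card ι : ℝ)⁻¹ • ∑ j, x j) := by
  have hΩ : ∀ Ω ∈ univ.powersetCard s,
      (if i ∈ Ω then x i - (s : ℝ)⁻¹ • ∑ j ∈ Ω, x j else 0)
        = (s : ℝ)⁻¹ • if i ∈ Ω then ∑ j ∈ Ω, (x i - x j) else 0 := by
    intro Ω hΩ
    split_ifs with hi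
    · rw [← (mem_powersetCard.1 hΩ).2, sub_inv_card_smul_sum ⟨i, hi⟩]
    · rw [smul_zero]
  have hn : (#(univ : Finset ι) : ℝ) ≠ 0 :=
    Nat.cast_ne_zero.2 (card_ne_zero_of_mem (mem_univ i))
  rw [sum_congr rfl hΩ, ← smul_sum, sum_powersetCard_ite_mem_sum (mem_univ i) hs (sub_self _),
    ← card_univ, sub_inv_card_smul_sum ⟨i, mem_univ i⟩, ← Nat.cast_smul_eq_nsmul ℝ, smul_smul,
    smul_smul]
  congr 1
  field_simp

end SubsetAverages

lemma mul_div_mul_choose_sub_two_eq_choose {n s : ℕ} (hs : 2 ≤ s) {p : ℝ} (hp : p ≠ 0) :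
    p * ((n - 1) / (p * (s - 1))) * ((n - 2).choose (s - 2) * n / s) = (n.choose s : ℝ) := by
  have hs1 : (s : ℝ) - 1 ≠ 0 := by
    have : (2 : ℝ) ≤ s := by exact_mod_cast hs
    linarith
  have hs0 : (s : ℝ) ≠ 0 := by positivity
  have h : (n.choose s * s.choose 2 : ℝ) = n.choose 2 * (n - 2).choose (s - 2) := by
    exact_mod_cast Nat.choose_mul hs
  rw [Nat.cast_choose_two, Nat.cast_choose_two] at h
  field_simp
  linarith

theorem tamuna_d_second_moment_general
    {d n : ℕ} (s : ℕ) (hs : 2 ≤ s) (hsn : s ≤ n)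
    (p : ℝ) (hp0 : 0 < p)
    (a ω : ℝ) (ha : a = ((n : ℝ) - 1) / (p * ((s : ℝ) - 1)))
    (hω : ω = ((n : ℝ) - 1) / (p * ((s : ℝ) - 1)) - 1)
    (xh : Fin n → EuclideanSpace ℝ (Fin d))
    (Wxh : Fin n → EuclideanSpace ℝ (Fin d))
    (hWxh : ∀ i, Wxh i = xh i - (n : ℝ)⁻¹ • ∑ j, xh j)
    (D : Finset (Fin n) → Fin n → EuclideanSpace ℝ (Fin d))
    (hD : ∀ Ω i, D Ω i =
      if i ∈ Ω then a • (xh i - (s : ℝ)⁻¹ • ∑ j ∈ Ω, xh j) else 0) :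
    (p * ((((Finset.univ : Finset (Fin n)).powersetCard s).card : ℝ)⁻¹ *
        ∑ Ω ∈ (Finset.univ : Finset (Fin n)).powersetCard s, ∑ i, ‖D Ω i‖ ^ 2)
      = (((n : ℝ) - 1) / (p * ((s : ℝ) - 1))) * ∑ i, ‖Wxh i‖ ^ 2) ∧
    (p * ((((Finset.univ : Finset (Fin n)).powersetCard s).card : ℝ)⁻¹ *
        ∑ Ω ∈ (Finset.univ : Finset (Fin n)).powersetCard s, ∑ i, ‖D Ω i - Wxh i‖ ^ 2)
      + (1 - p) * ∑ i, ‖(0 : EuclideanSpace ℝ (Fin d)) - Wxh i‖ ^ 2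
      = ω * ∑ i, ‖Wxh i‖ ^ 2) := by
  rw [← ha] at hω ⊢
  set K := (univ : Finset (Fin n)).powersetCard s
  set C : ℝ := (n - 2).choose (s - 2) * n / s
  have hscale : p * a * C = #K := by
    rw [ha, card_powersetCard, card_univ, Fintype.card_fin,
      mul_div_mul_choose_sub_two_eq_choose hs hp0.ne']
  have hD' : ∀ Ω i, D Ω i = a • if i ∈ Ω then xh i - (s : ℝ)⁻¹ • ∑ j ∈ Ω, xh j else 0 := by
    intro Ω i
    rw [hD, smul_ite, smul_zero]
  have hmean : ∀ i, ∑ Ω ∈ K, D Ω i = (a * C) • Wxh i := by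
    intro i
    rw [sum_congr rfl fun Ω _ => hD' Ω i, ← smul_sum, sum_powersetCard_ite_mem_sub_mean xh hs,
      Fintype.card_fin, ← hWxh, smul_smul]
  have hsq : ∑ Ω ∈ K, ∑ i, ‖D Ω i‖ ^ 2 = a ^ 2 * C * ∑ i, ‖Wxh i‖ ^ 2 := by
    simp only [hD, apply_ite (‖·‖ ^ 2), norm_zero, zero_pow two_ne_zero, sum_ite_mem,
      univ_inter, norm_smul, mul_pow, Real.norm_eq_abs, sq_abs, ← mul_sum]
    rw [sum_powersetCard_sum_norm_sub_mean_sq xh hs, Fintype.card_fin]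
    simp only [← hWxh, C, mul_assoc]
  have hN : p * a * C ≠ 0 := by
    rw [hscale]
    simp [K, Nat.choose_eq_zero_iff, hsn]
  have hp : p ≠ 0 := hp0.ne'
  have ha0 : a ≠ 0 := right_ne_zero_of_mul (left_ne_zero_of_mul hN)
  have hC : C ≠ 0 := right_ne_zero_of_mul hN
  simp only [sum_sum_norm_sub_sq_of_sum_eq_smul hmean, hsq, zero_sub, norm_neg, ← hscale, hω]
  constructor <;> field_simp
  ring

/-- Second moment of the TAMUNA random vector `d`:
`E[∑_i ‖d_i‖²] = ((n−1)/(p(s−1))) ∑_i ‖(Wx̂)_i‖²`, and consequently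
`E[‖d − Wx̂‖²] = ω ‖Wx̂‖²` with `ω = (n−1)/(p(s−1)) − 1`. -/
theorem tamuna_d_second_moment
    {d n : ℕ} (hn : 3 ≤ n) (s : ℕ) (hs : 2 ≤ s) (hsn : s ≤ n)
    (p : ℝ) (hp0 : 0 < p) (hp1 : p ≤ 1)
    (a ω : ℝ) (ha : a = ((n : ℝ) - 1) / (p * ((s : ℝ) - 1)))
    (hω : ω = ((n : ℝ) - 1) / (p * ((s : ℝ) - 1)) - 1)
    (xh : Fin n → EuclideanSpace ℝ (Fin d))
    (Wxh : Fin n → EuclideanSpace ℝ (Fin d))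
    (hWxh : ∀ i, Wxh i = xh i - (n : ℝ)⁻¹ • ∑ j, xh j)
    (D : Finset (Fin n) → Fin n → EuclideanSpace ℝ (Fin d))
    (hD : ∀ Ω i, D Ω i =
      if i ∈ Ω then a • (xh i - (s : ℝ)⁻¹ • ∑ j ∈ Ω, xh j) else 0) :
    (p * ((((Finset.univ : Finset (Fin n)).powersetCard s).card : ℝ)⁻¹ *
        ∑ Ω ∈ (Finset.univ : Finset (Fin n)).powersetCard s, ∑ i, ‖D Ω i‖ ^ 2)
      = (((n : ℝ) - 1) / (p * ((s : ℝ) - 1))) * ∑ i, ‖Wxh i‖ ^ 2) ∧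
    (p * ((((Finset.univ : Finset (Fin n)).powersetCard s).card : ℝ)⁻¹ *
        ∑ Ω ∈ (Finset.univ : Finset (Fin n)).powersetCard s, ∑ i, ‖D Ω i - Wxh i‖ ^ 2)
      + (1 - p) * ∑ i, ‖(0 : EuclideanSpace ℝ (Fin d)) - Wxh i‖ ^ 2
      = ω * ∑ i, ‖Wxh i‖ ^ 2) :=
  tamuna_d_second_moment_general s hs hsn p hp0 a ω ha hω xh Wxh hWxh D hD
end

section
/- Let each f_i: ℝ^d → ℝ (i = 1,…,n) be convex and L-smooth, let x* be a minimizer of f = (1/n)∑_i f_i, and let x_1,…,x_n ∈ ℝ^d with x̄ = (1/n)∑_i x_i. Then ‖∇f(x̄)‖² ≤ (2L²/n)∑_{i=1}^n ‖x_i − x̄‖² + (4L/n)∑_{i=1}^n D_{f_i}(x_i, x*), where D_{f_i}(x, y) = f_i(x) − f_i(y) − ⟨∇f_i(y), x − y⟩. -/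
/-!
Since `x*` minimizes `F`, `∇F(x*) = 0`, so `∇F(x̄)` is the average of the differences
`∇f_i(x̄) - ∇f_i(x*)`, and Jensen bounds its squared norm by the average of their squared norms.
Each difference is split through `∇f_i(x_i)`: the first part is controlled by `L`-smoothness,
the second by cocoercivity `‖∇f_i(x_i) - ∇f_i(x*)‖² ≤ 2L D_{f_i}(x_i, x*)`, which comes from
comparing the quadratic upper model of `f_i` at `x_i` with its linear lower model at `x*` at the
gradient step `x_i - (∇f_i(x_i) - ∇f_i(x*)) / L`.
-/

open scoped RealInnerProductSpace Gradient
open Finset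

lemma norm_inv_card_smul_sum_sq_le {E ι : Type*} [SeminormedAddCommGroup E] [NormedSpace ℝ E]
    (s : Finset ι) (v : ι → E) :
    ‖(#s : ℝ)⁻¹ • ∑ i ∈ s, v i‖ ^ 2 ≤ (#s : ℝ)⁻¹ * ∑ i ∈ s, ‖v i‖ ^ 2 := by
  have hsum : ‖∑ i ∈ s, v i‖ ^ 2 ≤ #s * ∑ i ∈ s, ‖v i‖ ^ 2 :=
    (pow_le_pow_left₀ (norm_nonneg _) (norm_sum_le _ _) 2).trans (sq_sum_le_card_mul_sum_sq ..)
  calc ‖(#s : ℝ)⁻¹ • ∑ i ∈ s, v i‖ ^ 2 = (#s : ℝ)⁻¹ ^ 2 * ‖∑ i ∈ s, v i‖ ^ 2 := by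
        rw [norm_smul, mul_pow, Real.norm_of_nonneg (by positivity)]
    _ ≤ (#s : ℝ)⁻¹ ^ 2 * (#s * ∑ i ∈ s, ‖v i‖ ^ 2) := by gcongr
    _ = (#s : ℝ)⁻¹ * ∑ i ∈ s, ‖v i‖ ^ 2 := by
        rcases eq_or_ne (#s : ℝ) 0 with h | h
        · simp [h]
        · field_simp

section

variable {E : Type*} [NormedAddCommGroup E] [InnerProductSpace ℝ E] [CompleteSpace E]

noncomputable def bregman (f : E → ℝ) (x y : E) : ℝ := f x - f y - ⟪∇ f y, x - y⟫

lemma HasGradientAt.hasDerivAt_comp_add_smul {f : E → ℝ} {g x v : E} {t : ℝ}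
    (hf : HasGradientAt f g (x + t • v)) :
    HasDerivAt (fun s : ℝ => f (x + s • v)) ⟪g, v⟫ t := by
  have hline : HasDerivAt (fun s : ℝ => x + s • v) v t := by
    simpa using ((hasDerivAt_id t).smul_const v).const_add x
  simpa [Function.comp_def] using
    (hasGradientAt_iff_hasFDerivAt.mp hf).comp_hasDerivAt t hline

lemma ConvexOn.add_inner_gradient_le {f : E → ℝ} (hc : ConvexOn ℝ Set.univ f) {x : E}
    (hf : DifferentiableAt ℝ f x) (y : E) : f x + ⟪∇ f x, y - x⟫ ≤ f y := by
  have hline : ConvexOn ℝ Set.univ (fun s : ℝ => f (x + s • (y - x))) := by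
    have hcomp : (fun s : ℝ => f (x + s • (y - x))) = f ∘ AffineMap.lineMap x y := by
      ext s
      simp [AffineMap.lineMap_apply_module', add_comm]
    simpa [hcomp] using hc.comp_affineMap (AffineMap.lineMap x y)
  have hslope := hline.le_slope_of_hasDerivAt (Set.mem_univ 0) (Set.mem_univ 1) zero_lt_one
    (HasGradientAt.hasDerivAt_comp_add_smul (by simpa using hf.hasGradientAt))
  simp only [slope_def_field, one_smul, zero_smul, add_zero, sub_zero, div_one,
    add_sub_cancel] at hslope
  linarith

lemma le_add_inner_gradient_add_sq_of_lipschitz {f : E → ℝ} (hf : Differentiable ℝ f) {L : ℝ}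
    (hlip : ∀ a b, ‖∇ f a - ∇ f b‖ ≤ L * ‖a - b‖) (x y : E) :
    f y ≤ f x + ⟪∇ f x, y - x⟫ + L / 2 * ‖y - x‖ ^ 2 := by
  set v := y - x
  let h : ℝ → ℝ := fun t => f (x + t • v) - t * ⟪∇ f x, v⟫ - L / 2 * t ^ 2 * ‖v‖ ^ 2
  have hderiv : ∀ t : ℝ, HasDerivAt h (⟪∇ f (x + t • v), v⟫ - ⟪∇ f x, v⟫ - L * t * ‖v‖ ^ 2) t := by
    intro t
    have hquad := ((hasDerivAt_pow 2 t).const_mul (L / 2)).mul_const (‖v‖ ^ 2)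
    refine ((((hf (x + t • v)).hasGradientAt.hasDerivAt_comp_add_smul).sub
      ((hasDerivAt_id' t).mul_const ⟪∇ f x, v⟫)).sub hquad).congr_deriv ?_
    push_cast
    ring
  have hderiv_nonpos : ∀ t ∈ interior (Set.Icc (0 : ℝ) 1), deriv h t ≤ 0 := by
    intro t ht
    rw [interior_Icc] at ht
    rw [(hderiv t).deriv, ← inner_sub_left]
    calc ⟪∇ f (x + t • v) - ∇ f x, v⟫ - L * t * ‖v‖ ^ 2
        ≤ L * ‖t • v‖ * ‖v‖ - L * t * ‖v‖ ^ 2 := by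
          gcongr
          exact (real_inner_le_norm _ _).trans (by
            simpa using mul_le_mul_of_nonneg_right (hlip (x + t • v) x) (norm_nonneg v))
      _ = 0 := by rw [norm_smul, Real.norm_of_nonneg ht.1.le]; ring
  have hanti : AntitoneOn h (Set.Icc 0 1) :=
    antitoneOn_of_deriv_nonpos (convex_Icc 0 1)
      (fun t _ => (hderiv t).continuousAt.continuousWithinAt)
      (fun t _ => (hderiv t).differentiableAt.differentiableWithinAt) hderiv_nonpos
  have h01 := hanti (Set.left_mem_Icc.mpr zero_le_one) (Set.right_mem_Icc.mpr zero_le_one)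
    zero_le_one
  simp only [h, v, zero_smul, one_smul, add_zero, add_sub_cancel, zero_mul, sub_zero, one_mul,
    one_pow, mul_one] at h01
  simp only [v]
  linarith

lemma ConvexOn.norm_gradient_sub_sq_le_bregman {f : E → ℝ} (hc : ConvexOn ℝ Set.univ f)
    (hf : Differentiable ℝ f) {L : ℝ} (hL : 0 < L)
    (hlip : ∀ a b, ‖∇ f a - ∇ f b‖ ≤ L * ‖a - b‖) (x y : E) :
    ‖∇ f x - ∇ f y‖ ^ 2 ≤ 2 * L * bregman f x y := by
  set g := ∇ f x - ∇ f y
  set w := x - L⁻¹ • g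
  have hupper := le_add_inner_gradient_add_sq_of_lipschitz hf hlip x w
  have hlower := hc.add_inner_gradient_le (hf y) w
  have hwx : w - x = -(L⁻¹ • g) := by simp [w]
  have hwy : w - y = (x - y) - L⁻¹ • g := by simp only [w]; abel
  rw [hwx, inner_neg_right, real_inner_smul_right, norm_neg, norm_smul, Real.norm_of_nonneg
    (inv_nonneg.mpr hL.le)] at hupper
  rw [hwy, inner_sub_right, real_inner_smul_right] at hlower
  have hgg : ⟪∇ f x, g⟫ - ⟪∇ f y, g⟫ = ‖g‖ ^ 2 := by
    rw [← inner_sub_left, real_inner_self_eq_norm_sq]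
  have hbound : ‖g‖ ^ 2 / (2 * L) ≤ bregman f x y := by
    unfold bregman
    have : L⁻¹ * (⟪∇ f x, g⟫ - ⟪∇ f y, g⟫) - L / 2 * (L⁻¹ * ‖g‖) ^ 2 = ‖g‖ ^ 2 / (2 * L) := by
      rw [hgg]; field_simp; ring
    nlinarith
  rwa [div_le_iff₀' (by positivity)] at hbound

lemma ConvexOn.norm_gradient_sub_sq_le_norm_sub_sq_add_bregman {f : E → ℝ}
    (hc : ConvexOn ℝ Set.univ f) (hf : Differentiable ℝ f) {L : ℝ} (hL : 0 < L)
    (hlip : ∀ a b, ‖∇ f a - ∇ f b‖ ≤ L * ‖a - b‖) (x y z : E) :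
    ‖∇ f z - ∇ f y‖ ^ 2 ≤ 2 * L ^ 2 * ‖x - z‖ ^ 2 + 4 * L * bregman f x y := by
  have hzx : ‖∇ f z - ∇ f x‖ ≤ L * ‖x - z‖ := norm_sub_rev x z ▸ hlip z x
  have hxy := hc.norm_gradient_sub_sq_le_bregman hf hL hlip x y
  calc ‖∇ f z - ∇ f y‖ ^ 2 = ‖(∇ f z - ∇ f x) + (∇ f x - ∇ f y)‖ ^ 2 := by
        rw [sub_add_sub_cancel]
    _ ≤ 2 * (‖∇ f z - ∇ f x‖ ^ 2 + ‖∇ f x - ∇ f y‖ ^ 2) :=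
        (pow_le_pow_left₀ (norm_nonneg _) (norm_add_le _ _) 2).trans add_sq_le
    _ ≤ 2 * ((L * ‖x - z‖) ^ 2 + 2 * L * bregman f x y) := by
        gcongr
    _ = 2 * L ^ 2 * ‖x - z‖ ^ 2 + 4 * L * bregman f x y := by ring

lemma IsLocalMin.gradient_eq_zero {f : E → ℝ} {a : E} (h : IsLocalMin f a) : ∇ f a = 0 := by
  simp [gradient, h.fderiv_eq_zero]

lemma hasGradientAt_const_mul_sum {ι : Type*} (s : Finset ι) (c : ℝ) {f : ι → E → ℝ} {p : E}
    (hf : ∀ i ∈ s, DifferentiableAt ℝ (f i) p) :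
    HasGradientAt (fun x => c * ∑ i ∈ s, f i x) (c • ∑ i ∈ s, ∇ (f i) p) p := by
  rw [hasGradientAt_iff_hasFDerivAt, map_smul, map_sum]
  exact (HasFDerivAt.fun_sum fun i hi => (hf i hi).hasFDerivAt.congr_fderiv
    toDual_gradient.symm).const_smul c

end

theorem grad_at_average_bound_general
    {d n : ℕ}
    (f : Fin n → EuclideanSpace ℝ (Fin d) → ℝ) (L : ℝ) (hL : 0 < L)
    (hdiff : ∀ i, Differentiable ℝ (f i))
    (hconv : ∀ i, ConvexOn ℝ Set.univ (f i))
    (hsmooth : ∀ i x y, ‖gradient (f i) x - gradient (f i) y‖ ≤ L * ‖x - y‖)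
    (F : EuclideanSpace ℝ (Fin d) → ℝ) (hF : F = fun x => (n : ℝ)⁻¹ * ∑ i, f i x)
    (xstar : EuclideanSpace ℝ (Fin d)) (hmin : ∀ y, F xstar ≤ F y)
    (x : Fin n → EuclideanSpace ℝ (Fin d))
    (xbar : EuclideanSpace ℝ (Fin d)) :
    ‖gradient F xbar‖ ^ 2 ≤
      (2 * L ^ 2 / n) * ∑ i, ‖x i - xbar‖ ^ 2
      + (4 * L / n) * ∑ i,
          (f i (x i) - f i xstar - ⟪gradient (f i) xstar, x i - xstar⟫) := by
  have hgradF (p) : HasGradientAt F ((n : ℝ)⁻¹ • ∑ i, ∇ (f i) p) p :=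
    hF ▸ hasGradientAt_const_mul_sum _ _ fun i _ => hdiff i p
  have hstar : ∇ F xstar = 0 := IsLocalMin.gradient_eq_zero (.of_forall hmin)
  have hbar : ∇ F xbar = (n : ℝ)⁻¹ • ∑ i, (∇ (f i) xbar - ∇ (f i) xstar) := by
    rw [sum_sub_distrib, smul_sub, ← (hgradF xbar).gradient, ← (hgradF xstar).gradient, hstar,
      sub_zero]
  calc ‖∇ F xbar‖ ^ 2 ≤ (n : ℝ)⁻¹ * ∑ i, ‖∇ (f i) xbar - ∇ (f i) xstar‖ ^ 2 := by
        simpa [hbar] using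
          norm_inv_card_smul_sum_sq_le univ fun i => ∇ (f i) xbar - ∇ (f i) xstar
    _ ≤ (n : ℝ)⁻¹ * ∑ i, (2 * L ^ 2 * ‖x i - xbar‖ ^ 2 + 4 * L * bregman (f i) (x i) xstar) := by
        gcongr with i
        exact (hconv i).norm_gradient_sub_sq_le_norm_sub_sq_add_bregman (hdiff i) hL (hsmooth i)
          _ _ _
    _ = _ := by
        simp only [sum_add_distrib, ← mul_sum, bregman]
        ring

/-- Bound on the full gradient at the average point:
`‖∇f(x̄)‖² ≤ (2L²/n)∑_i‖x_i − x̄‖² + (4L/n)∑_i D_{f_i}(x_i, x*)`, where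
`f = (1/n)∑ f_i`, each `f_i` convex `L`-smooth, and `x*` minimizes `f`. -/
theorem grad_at_average_bound
    {d n : ℕ} (hn : 1 ≤ n)
    (f : Fin n → EuclideanSpace ℝ (Fin d) → ℝ) (L : ℝ) (hL : 0 < L)
    (hdiff : ∀ i, Differentiable ℝ (f i))
    (hconv : ∀ i, ConvexOn ℝ Set.univ (f i))
    (hsmooth : ∀ i x y, ‖gradient (f i) x - gradient (f i) y‖ ≤ L * ‖x - y‖)
    (F : EuclideanSpace ℝ (Fin d) → ℝ) (hF : F = fun x => (n : ℝ)⁻¹ * ∑ i, f i x)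
    (xstar : EuclideanSpace ℝ (Fin d)) (hmin : ∀ y, F xstar ≤ F y)
    (x : Fin n → EuclideanSpace ℝ (Fin d))
    (xbar : EuclideanSpace ℝ (Fin d)) (hxbar : xbar = (n : ℝ)⁻¹ • ∑ i, x i) :
    ‖gradient F xbar‖ ^ 2 ≤
      (2 * L ^ 2 / n) * ∑ i, ‖x i - xbar‖ ^ 2
      + (4 * L / n) * ∑ i,
          (f i (x i) - f i xstar - ⟪gradient (f i) xstar, x i - xstar⟫) :=
  grad_at_average_bound_general f L hL hdiff hconv hsmooth F hF xstar hmin x xbar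
end
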